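/- Let A be a bounded linear operator on H, let g, h : [0,∞) → [0,∞) be continuous functions with g(s)h(s) = s for all s ≥ 0, let φ be an Orlicz function, and let α ∈ [0,1]. Then φ( ber(A)² ) ≤ ber( (α/2)·( φ(g(|A|)⁴) + φ(h(|A*|)⁴) ) + (1−α)·φ(|A|²) ), and also φ( ber(A)² ) ≤ ber( (α/2)·( φ(g(|A*|)⁴) + φ(h(|A|)⁴) ) + (1−α)·φ(|A*|²) ). -/

import Mathlib

open ContinuousLinearMap
open scoped InnerProductSpace

/-- The `t`-Berezin norm of `A` with respect to the family `k` of (normalized reproducing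
kernel) vectors. -/
noncomputable def tber {E : Type*} [NormedAddCommGroup E] [InnerProductSpace ℂ E]
    [CompleteSpace E] {ι : Type*} (k : ι → E) (t : ℝ) (A : E →L[ℂ] E) : ℝ :=
  ⨆ p : ι × ι, (t * ‖⟪A (k p.1), k p.2⟫_ℂ‖ + (1 - t) * ‖⟪adjoint A (k p.1), k p.2⟫_ℂ‖)

/-- The Berezin norm of `A` with respect to the family `k`. -/
noncomputable def berNorm {E : Type*} [NormedAddCommGroup E] [InnerProductSpace ℂ E]
    {ι : Type*} (k : ι → E) (A : E →L[ℂ] E) : ℝ :=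
  ⨆ p : ι × ι, ‖⟪A (k p.1), k p.2⟫_ℂ‖

/-- The Berezin number of `A` with respect to the family `k`. -/
noncomputable def berNum {E : Type*} [NormedAddCommGroup E] [InnerProductSpace ℂ E]
    {ι : Type*} (k : ι → E) (A : E →L[ℂ] E) : ℝ :=
  ⨆ l : ι, ‖⟪A (k l), k l⟫_ℂ‖

/-- The modulus `|A| = (A*A)^(1/2)` of an operator, via the continuous functional calculus. -/
noncomputable def absOp {H : Type*} [NormedAddCommGroup H] [InnerProductSpace ℂ H]
    [CompleteSpace H] (A : H →L[ℂ] H) : H →L[ℂ] H :=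
  cfc Real.sqrt (adjoint A * A)

/-- Real powers of a (positive) operator via the continuous functional calculus. -/
noncomputable def rpowOp {H : Type*} [NormedAddCommGroup H] [InnerProductSpace ℂ H]
    [CompleteSpace H] (A : H →L[ℂ] H) (r : ℝ) : H →L[ℂ] H :=
  cfc (fun x : ℝ => x ^ r) A

set_option linter.unusedSectionVars false
set_option linter.unusedVariables false

section Aux

variable {H : Type*} [NormedAddCommGroup H] [InnerProductSpace ℂ H] [CompleteSpace H]

lemma ipNonneg' (T : H →L[ℂ] H) (hT : 0 ≤ T) (x : H) : 0 ≤ Complex.re ⟪T x, x⟫_ℂ := by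
  have := ((nonneg_iff_isPositive T).mp hT).inner_nonneg_left x
  exact (Complex.nonneg_iff.mp this).1

lemma ipMono' {T S : H →L[ℂ] H} (hTS : T ≤ S) (x : H) :
    Complex.re ⟪T x, x⟫_ℂ ≤ Complex.re ⟪S x, x⟫_ℂ := by
  have h := ipNonneg' (S - T) (sub_nonneg.mpr hTS) x
  rw [ContinuousLinearMap.sub_apply, inner_sub_left, Complex.sub_re] at h
  linarith

lemma ipSmulAdd' (r c : ℝ) (S : H →L[ℂ] H) (x : H) (hx : ‖x‖ = 1) :
    Complex.re ⟪(algebraMap ℝ (H →L[ℂ] H) r + c • S) x, x⟫_ℂ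
      = r + c * Complex.re ⟪S x, x⟫_ℂ := by
  have hxx : Complex.re ⟪x, x⟫_ℂ = 1 := by
    simpa [hx] using inner_self_eq_norm_sq (𝕜 := ℂ) x
  rw [ContinuousLinearMap.add_apply, ContinuousLinearMap.smul_apply, inner_add_left]
  rw [Algebra.algebraMap_eq_smul_one]
  rw [ContinuousLinearMap.smul_apply, ContinuousLinearMap.one_apply]
  rw [RCLike.real_smul_eq_coe_smul (K := ℂ) r x, RCLike.real_smul_eq_coe_smul (K := ℂ) c (S x)]
  rw [inner_smul_left, inner_smul_left]
  simp [hxx, hx, Complex.add_re, Complex.mul_re]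

lemma ipCombo' (a b : ℝ) (P Q R : H →L[ℂ] H) (x : H) :
    Complex.re ⟪(a • (P + Q) + b • R) x, x⟫_ℂ
      = a * (Complex.re ⟪P x, x⟫_ℂ + Complex.re ⟪Q x, x⟫_ℂ) + b * Complex.re ⟪R x, x⟫_ℂ := by
  rw [ContinuousLinearMap.add_apply, ContinuousLinearMap.smul_apply,
    ContinuousLinearMap.smul_apply, ContinuousLinearMap.add_apply]
  rw [RCLike.real_smul_eq_coe_smul (K := ℂ) a, RCLike.real_smul_eq_coe_smul (K := ℂ) b]
  rw [inner_add_left, inner_smul_left, inner_smul_left, inner_add_left]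
  simp [Complex.add_re, Complex.mul_re, mul_add]

lemma ipAdjMul' (A : H →L[ℂ] H) (x : H) :
    Complex.re ⟪(adjoint A * A) x, x⟫_ℂ = ‖A x‖ ^ 2 := by
  rw [ContinuousLinearMap.mul_apply, adjoint_inner_left]
  simpa using inner_self_eq_norm_sq (𝕜 := ℂ) (A x)

lemma ipMulSelf' (T : H →L[ℂ] H) (hT : IsSelfAdjoint T) (x : H) :
    Complex.re ⟪(T * T) x, x⟫_ℂ = ‖T x‖ ^ 2 := by
  conv_lhs => rw [show T * T = adjoint T * T from by rw [hT.adjoint_eq]]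
  exact ipAdjMul' T x

open Polynomial in
lemma myPowInter (A : H →L[ℂ] H) (n : ℕ) :
    A * (adjoint A * A) ^ n = (A * adjoint A) ^ n * A := by
  induction n with
  | zero => simp
  | succ n ih =>
    rw [pow_succ, pow_succ, ← mul_assoc, ih, mul_assoc, mul_assoc, mul_assoc]

open Polynomial in
lemma myPolyInter (A : H →L[ℂ] H) (q : ℝ[X]) :
    A * aeval (adjoint A * A) q = aeval (A * adjoint A) q * A := by
  induction q using Polynomial.induction_on' with
  | add p q hp hq => simp only [map_add, mul_add, add_mul, hp, hq]
  | monomial n c =>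
    simp only [aeval_monomial]
    rw [← mul_assoc, ← Algebra.commutes c A, mul_assoc, myPowInter, ← mul_assoc,
      mul_assoc _ _ A]

open Polynomial in
lemma myCfcInter (V B C : H →L[ℂ] H) (hB : IsSelfAdjoint B) (hC : IsSelfAdjoint C)
    (hpoly : ∀ q : ℝ[X], V * aeval B q = aeval C q * V)
    (f : ℝ → ℝ) (hf : Continuous f) :
    V * cfc f B = cfc f C * V := by
  obtain ⟨R, hR0, hspecB, hspecC⟩ : ∃ R : ℝ, 0 ≤ R ∧ spectrum ℝ B ⊆ Set.Icc (-R) R ∧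
      spectrum ℝ C ⊆ Set.Icc (-R) R := by
    refine ⟨max (‖B‖ * ‖(1 : H →L[ℂ] H)‖) (‖C‖ * ‖(1 : H →L[ℂ] H)‖),
      le_trans (by positivity) (le_max_left _ _), ?_, ?_⟩
    · intro t ht
      have h1 : ‖t‖ ≤ ‖B‖ * ‖(1 : H →L[ℂ] H)‖ := spectrum.norm_le_norm_mul_of_mem ht
      exact abs_le.mp (le_trans h1 (le_max_left _ _))
    · intro t ht
      have h1 : ‖t‖ ≤ ‖C‖ * ‖(1 : H →L[ℂ] H)‖ := spectrum.norm_le_norm_mul_of_mem ht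
      exact abs_le.mp (le_trans h1 (le_max_right _ _))
  have hmem : (⟨fun t => f t, hf.comp continuous_subtype_val⟩ : C(Set.Icc (-R) R, ℝ))
      ∈ closure (polynomialFunctions (Set.Icc (-R) R) : Set C(Set.Icc (-R) R, ℝ)) := by
    rw [← Subalgebra.topologicalClosure_coe, polynomialFunctions_closure_eq_top]
    trivial
  obtain ⟨u, hu, hulim⟩ := mem_closure_iff_seq_limit.mp hmem
  have hex : ∀ n, ∃ q : ℝ[X], q.toContinuousMapOn (Set.Icc (-R) R) = u n := by
    intro n
    have h2 := hu n
    rw [polynomialFunctions_coe] at h2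
    obtain ⟨q, hq⟩ := h2
    exact ⟨q, hq⟩
  choose p hp using hex
  set fc : C(Set.Icc (-R) R, ℝ) := ⟨fun t => f t, hf.comp continuous_subtype_val⟩ with hfc
  have hdist : ∀ n (t : ℝ), t ∈ Set.Icc (-R) R → |f t - (p n).eval t| ≤ ‖fc - u n‖ := by
    intro n t ht
    have h3 := ContinuousMap.norm_coe_le_norm (fc - u n) ⟨t, ht⟩
    rw [ContinuousMap.sub_apply] at h3
    have e1 : fc ⟨t, ht⟩ = f t := rfl
    have e2 : u n ⟨t, ht⟩ = (p n).eval t := by rw [← hp n]; rfl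
    rw [e1, e2, Real.norm_eq_abs] at h3
    exact h3
  have hzero : Filter.Tendsto (fun n => ‖fc - u n‖) Filter.atTop (nhds 0) := by
    have h4 := (tendsto_iff_norm_sub_tendsto_zero.mp hulim)
    simpa [norm_sub_rev] using h4
  have hcfcB : ∀ n, ‖cfc f B - cfc (fun t => (p n).eval t) B‖ ≤ ‖fc - u n‖ := by
    intro n
    rw [← cfc_sub f (fun t => (p n).eval t) B (hf.continuousOn)
      ((p n).continuous).continuousOn]
    exact norm_cfc_le (norm_nonneg _) fun t ht => hdist n t (hspecB ht)
  have hcfcC : ∀ n, ‖cfc f C - cfc (fun t => (p n).eval t) C‖ ≤ ‖fc - u n‖ := by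
    intro n
    rw [← cfc_sub f (fun t => (p n).eval t) C (hf.continuousOn)
      ((p n).continuous).continuousOn]
    exact norm_cfc_le (norm_nonneg _) fun t ht => hdist n t (hspecC ht)
  have key1 : Filter.Tendsto (fun n => V * cfc (fun t => (p n).eval t) B)
      Filter.atTop (nhds (V * cfc f B)) := by
    rw [tendsto_iff_norm_sub_tendsto_zero]
    apply squeeze_zero (g := fun n => ‖V‖ * ‖fc - u n‖) (fun n => norm_nonneg _)
    · intro n
      calc ‖V * cfc (fun t => (p n).eval t) B - V * cfc f B‖
          = ‖V * (cfc (fun t => (p n).eval t) B - cfc f B)‖ := by rw [mul_sub]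
        _ ≤ ‖V‖ * ‖cfc (fun t => (p n).eval t) B - cfc f B‖ := norm_mul_le _ _
        _ ≤ ‖V‖ * ‖fc - u n‖ := by
            have := hcfcB n
            rw [norm_sub_rev] at this
            exact mul_le_mul_of_nonneg_left this (norm_nonneg _)
    · simpa using hzero.const_mul ‖V‖
  have key2 : Filter.Tendsto (fun n => cfc (fun t => (p n).eval t) C * V)
      Filter.atTop (nhds (cfc f C * V)) := by
    rw [tendsto_iff_norm_sub_tendsto_zero]
    apply squeeze_zero (g := fun n => ‖fc - u n‖ * ‖V‖) (fun n => norm_nonneg _)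
    · intro n
      calc ‖cfc (fun t => (p n).eval t) C * V - cfc f C * V‖
          = ‖(cfc (fun t => (p n).eval t) C - cfc f C) * V‖ := by rw [sub_mul]
        _ ≤ ‖cfc (fun t => (p n).eval t) C - cfc f C‖ * ‖V‖ := norm_mul_le _ _
        _ ≤ ‖fc - u n‖ * ‖V‖ := by
            have := hcfcC n
            rw [norm_sub_rev] at this
            exact mul_le_mul_of_nonneg_right this (norm_nonneg _)
    · simpa using hzero.mul_const ‖V‖
  have hsame : (fun n => V * cfc (fun t => (p n).eval t) B)
      = (fun n => cfc (fun t => (p n).eval t) C * V) := by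
    funext n
    rw [show (fun t => (p n).eval t) = (p n).eval from rfl, cfc_polynomial _ B,
      cfc_polynomial _ C, hpoly]
  rw [hsame] at key1
  exact tendsto_nhds_unique key1 key2

lemma myJensen (S : H →L[ℂ] H) (hS : 0 ≤ S) (x : H) (hx : ‖x‖ = 1)
    (φ : ℝ → ℝ) (hφc : ContinuousOn φ (Set.Ici 0)) (hφconv : ConvexOn ℝ (Set.Ici 0) φ)
    (hφnn : ∀ s, 0 ≤ s → 0 ≤ φ s) (hφ0 : φ 0 = 0) :
    φ (Complex.re ⟪S x, x⟫_ℂ) ≤ Complex.re ⟪cfc φ S x, x⟫_ℂ := by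
  have hsa : IsSelfAdjoint S := ((nonneg_iff_isPositive S).mp hS).isSelfAdjoint
  have hspec : spectrum ℝ S ⊆ Set.Ici 0 := fun t ht => spectrum_nonneg_of_nonneg hS ht
  have hφS : 0 ≤ cfc φ S := cfc_nonneg fun t ht => hφnn t (hspec ht)
  set t0 : ℝ := Complex.re ⟪S x, x⟫_ℂ with ht0
  have ht0nn : 0 ≤ t0 := ipNonneg' S hS x
  rcases eq_or_lt_of_le ht0nn with h0 | h0
  · rw [← h0, hφ0]
    exact ipNonneg' _ hφS x
  · set c : ℝ := sSup ((fun s => (φ t0 - φ s) / (t0 - s)) '' Set.Ico 0 t0) with hc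
    have hbdd : BddAbove ((fun s => (φ t0 - φ s) / (t0 - s)) '' Set.Ico 0 t0) := by
      refine ⟨(φ (t0 + 1) - φ t0) / (t0 + 1 - t0), ?_⟩
      rintro y ⟨s, hs, rfl⟩
      exact hφconv.slope_mono_adjacent hs.1 (by simp; linarith) hs.2 (by linarith)
    have hne : ((fun s => (φ t0 - φ s) / (t0 - s)) '' Set.Ico 0 t0).Nonempty :=
      ⟨_, ⟨0, ⟨le_refl 0, h0⟩, rfl⟩⟩
    have hline : ∀ t, 0 ≤ t → φ t0 + c * (t - t0) ≤ φ t := by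
      intro t ht
      rcases lt_trichotomy t t0 with hlt | heq | hgt
      · have hs : (φ t0 - φ t) / (t0 - t) ≤ c := le_csSup hbdd ⟨t, ⟨ht, hlt⟩, rfl⟩
        have h2 : φ t0 - φ t ≤ c * (t0 - t) := by
          rw [div_le_iff₀ (by linarith)] at hs
          linarith
        have h3 : c * (t - t0) = -(c * (t0 - t)) := by ring
        linarith
      · rw [heq]; simp
      · have hub : c ≤ (φ t - φ t0) / (t - t0) := by
          apply csSup_le hne
          rintro y ⟨s, hs, rfl⟩
          exact hφconv.slope_mono_adjacent hs.1 (Set.mem_Ici.mpr ht) hs.2 hgt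
        have h2 : c * (t - t0) ≤ φ t - φ t0 := by
          rw [le_div_iff₀ (by linarith)] at hub
          linarith
        linarith
    have hcfcle : cfc (fun t => (φ t0 - c * t0) + c * t) S ≤ cfc φ S := by
      apply cfc_mono
      · intro t ht
        have := hline t (hspec ht)
        linarith
      · exact (by fun_prop : Continuous fun t : ℝ => (φ t0 - c * t0) + c * t).continuousOn
      · exact hφc.mono hspec
    have hcfceq : cfc (fun t => (φ t0 - c * t0) + c * t) S
        = algebraMap ℝ (H →L[ℂ] H) (φ t0 - c * t0) + c • S := by
      rw [cfc_const_add _ _ _ (by fun_prop : Continuous fun t : ℝ => c * t).continuousOn]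
      rw [cfc_const_mul_id c S]
    have hfin := ipMono' hcfcle x
    rw [hcfceq, ipSmulAdd' _ _ _ _ hx] at hfin
    calc φ t0 = (φ t0 - c * t0) + c * t0 := by ring
      _ ≤ Complex.re ⟪cfc φ S x, x⟫_ℂ := hfin

end Aux

section Mixed
variable {H : Type*} [NormedAddCommGroup H] [InnerProductSpace ℂ H] [CompleteSpace H]

lemma ipAddConst' (r : ℝ) (S : H →L[ℂ] H) (x : H) (hx : ‖x‖ = 1) :
    Complex.re ⟪(S + algebraMap ℝ (H →L[ℂ] H) r) x, x⟫_ℂ = Complex.re ⟪S x, x⟫_ℂ + r := by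
  have h := ipSmulAdd' r 1 S x hx
  rw [one_smul] at h
  rw [add_comm S, h]
  ring

set_option maxHeartbeats 1000000 in
lemma myMixed (A : H →L[ℂ] H) {g h : ℝ → ℝ}
    (hg : ContinuousOn g (Set.Ici 0)) (hh : ContinuousOn h (Set.Ici 0))
    (hg0 : ∀ s, 0 ≤ s → 0 ≤ g s) (hh0 : ∀ s, 0 ≤ s → 0 ≤ h s)
    (hgh : ∀ s, 0 ≤ s → g s * h s = s) (x : H) (hx : ‖x‖ = 1) :
    ‖⟪A x, x⟫_ℂ‖ ^ 2 ≤
      Complex.re ⟪cfc (fun t => g (Real.sqrt t) ^ 2) (adjoint A * A) x, x⟫_ℂ *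
      Complex.re ⟪cfc (fun t => h (Real.sqrt t) ^ 2) (A * adjoint A) x, x⟫_ℂ := by
  have hgs : Continuous fun t : ℝ => g (Real.sqrt t) :=
    hg.comp_continuous Real.continuous_sqrt fun t => Real.sqrt_nonneg t
  have hhs : Continuous fun t : ℝ => h (Real.sqrt t) :=
    hh.comp_continuous Real.continuous_sqrt fun t => Real.sqrt_nonneg t
  set B := adjoint A * A with hBdef
  set C := A * adjoint A with hCdef
  have hBsa : IsSelfAdjoint B := by
    rw [hBdef, ← star_eq_adjoint]; exact IsSelfAdjoint.star_mul_self A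
  have hCsa : IsSelfAdjoint C := by
    rw [hCdef, ← star_eq_adjoint]; exact IsSelfAdjoint.mul_star_self A
  have hC0 : (0 : H →L[ℂ] H) ≤ C := by
    rw [hCdef, ← star_eq_adjoint]; exact mul_star_self_nonneg A
  have hspecC : spectrum ℝ C ⊆ Set.Ici 0 := fun t ht => spectrum_nonneg_of_nonneg hC0 ht
  set Gg : ℝ → ℝ := fun t => g (Real.sqrt t) ^ 2 with hGg
  set Hh : ℝ → ℝ := fun t => h (Real.sqrt t) ^ 2 with hHh
  set u2 : ℝ := Complex.re ⟪cfc Gg B x, x⟫_ℂ with hu2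
  set v2 : ℝ := Complex.re ⟪cfc Hh C x, x⟫_ℂ with hv2
  have hu2nn : 0 ≤ u2 := ipNonneg' _ (cfc_nonneg fun t _ => by positivity) x
  have hv2nn : 0 ≤ v2 := ipNonneg' _ (cfc_nonneg fun t _ => by positivity) x
  have hEps : ∀ ε : ℝ, 0 < ε → ‖⟪A x, x⟫_ℂ‖ ^ 2 ≤ (u2 + ε) * v2 := by
    intro ε hε
    set sf : ℝ → ℝ := fun t => Real.sqrt (g (Real.sqrt t) ^ 2 + ε) with hsf
    have hsfc : Continuous sf := Real.continuous_sqrt.comp ((hgs.pow 2).add continuous_const)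
    have hsfpos : ∀ t, 0 < sf t := fun t => Real.sqrt_pos.mpr (by positivity)
    set rf : ℝ → ℝ := fun t => (sf t)⁻¹ with hrf
    have hrfc : Continuous rf := hsfc.inv₀ fun t => (hsfpos t).ne'
    set SA := cfc sf B with hSAdef
    set RA := cfc rf B with hRAdef
    have hSAsa : IsSelfAdjoint SA := cfc_predicate sf B
    have hRAsa : IsSelfAdjoint RA := cfc_predicate rf B
    have hRS : RA * SA = 1 := by
      rw [hRAdef, hSAdef, ← cfc_mul rf sf B hrfc.continuousOn hsfc.continuousOn]
      rw [show (fun t => rf t * sf t) = fun _ => (1 : ℝ) from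
        funext fun t => inv_mul_cancel₀ (hsfpos t).ne']
      exact cfc_const_one ℝ B
    have hAx : A x = (A * RA) (SA x) := by
      rw [ContinuousLinearMap.mul_apply, ← ContinuousLinearMap.mul_apply RA SA, hRS,
        ContinuousLinearMap.one_apply]
    have hinner : ⟪A x, x⟫_ℂ = ⟪SA x, adjoint (A * RA) x⟫_ℂ := by
      rw [adjoint_inner_right, ← hAx]
    have hnorm : ‖⟪A x, x⟫_ℂ‖ ≤ ‖SA x‖ * ‖adjoint (A * RA) x‖ := by
      rw [hinner]; exact norm_inner_le_norm _ _
    have hSA2 : ‖SA x‖ ^ 2 = u2 + ε := by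
      rw [← ipMulSelf' SA hSAsa x, hSAdef,
        ← cfc_mul sf sf B hsfc.continuousOn hsfc.continuousOn]
      rw [show (fun t => sf t * sf t) = fun t => Gg t + ε from funext fun t => by
        rw [hsf]; exact Real.mul_self_sqrt (by positivity)]
      rw [cfc_add_const ε Gg B ((hgs.pow 2).continuousOn)]
      exact ipAddConst' ε (cfc Gg B) x hx
    have hadj : adjoint (A * RA) = RA * adjoint A := by
      rw [← star_eq_adjoint, ← star_eq_adjoint, star_mul, hRAsa.star_eq]
    set ff : ℝ → ℝ := fun t => (Gg t + ε)⁻¹ with hff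
    have hffc : Continuous ff := ((hgs.pow 2).add continuous_const).inv₀ fun t =>
      ne_of_gt (by show (0:ℝ) < g (Real.sqrt t) ^ 2 + ε; positivity)
    have hRR : RA * RA = cfc ff B := by
      rw [hRAdef, ← cfc_mul rf rf B hrfc.continuousOn hrfc.continuousOn]
      apply cfc_congr
      intro t _
      rw [hrf, hff]
      simp only
      rw [← mul_inv]
      congr 1
      exact Real.mul_self_sqrt (by positivity)
    have hmul : cfc (fun t => ff t * t) C = cfc ff C * C := by
      rw [cfc_mul ff (fun t => t) C hffc.continuousOn continuousOn_id, cfc_id' ℝ C]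
    have hop : A * cfc ff B * adjoint A = cfc (fun t => ff t * t) C := by
      rw [myCfcInter A B C hBsa hCsa (myPolyInter A) ff hffc, mul_assoc, ← hCdef, hmul]
    have hle : cfc (fun t => ff t * t) C ≤ cfc Hh C := by
      apply cfc_mono
      · intro t ht
        have ht0 : (0 : ℝ) ≤ t := hspecC ht
        have hab : g (Real.sqrt t) * h (Real.sqrt t) = Real.sqrt t :=
          hgh _ (Real.sqrt_nonneg t)
        have hsq : Real.sqrt t ^ 2 = t := Real.sq_sqrt ht0
        have hb0 : 0 ≤ h (Real.sqrt t) := hh0 _ (Real.sqrt_nonneg t)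
        have ht' : t = (g (Real.sqrt t) * h (Real.sqrt t)) ^ 2 := by rw [hab]; exact hsq.symm
        have hpos : 0 < Gg t + ε := by positivity
        rw [hff, hHh]
        simp only
        rw [inv_mul_le_iff₀ hpos]
        rw [hGg]
        simp only
        nlinarith [sq_nonneg (h (Real.sqrt t)), hε.le]
      · exact (hffc.mul continuous_id).continuousOn
      · exact (hhs.pow 2).continuousOn
    have hv2' : ‖(RA * adjoint A) x‖ ^ 2 ≤ v2 := by
      have e1 : ‖(RA * adjoint A) x‖ ^ 2
          = Complex.re ⟪(RA * RA) (adjoint A x), adjoint A x⟫_ℂ := by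
        rw [ContinuousLinearMap.mul_apply]
        exact (ipMulSelf' RA hRAsa (adjoint A x)).symm
      have e2 : ⟪(RA * RA) (adjoint A x), adjoint A x⟫_ℂ
          = ⟪(A * (RA * RA) * adjoint A) x, x⟫_ℂ := by
        rw [adjoint_inner_right]
        simp only [ContinuousLinearMap.mul_apply]
      rw [e1, e2, hRR, hop]
      exact ipMono' hle x
    have hfac : ‖adjoint (A * RA) x‖ ^ 2 ≤ v2 := by rw [hadj]; exact hv2'
    have hsq := pow_le_pow_left₀ (norm_nonneg _) hnorm 2
    rw [mul_pow, hSA2] at hsq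
    exact hsq.trans (mul_le_mul_of_nonneg_left hfac (by linarith))
  by_contra hcon
  push_neg at hcon
  have hδ : 0 < (‖⟪A x, x⟫_ℂ‖ ^ 2 - u2 * v2) / (v2 + 1) := by
    apply div_pos (by linarith) (by linarith)
  have h3 := hEps _ hδ
  have key : (‖⟪A x, x⟫_ℂ‖ ^ 2 - u2 * v2) / (v2 + 1) * (v2 + 1)
      = ‖⟪A x, x⟫_ℂ‖ ^ 2 - u2 * v2 := div_mul_cancel₀ _ (by linarith)
  nlinarith [h3, key, hδ]

end Mixed

section Main
variable {H : Type*} [NormedAddCommGroup H] [InnerProductSpace ℂ H] [CompleteSpace H]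

lemma adjMulSelfNonneg (A : H →L[ℂ] H) : (0 : H →L[ℂ] H) ≤ adjoint A * A := by
  rw [← star_eq_adjoint]; exact star_mul_self_nonneg A

lemma adjMulSelfSA (A : H →L[ℂ] H) : IsSelfAdjoint (adjoint A * A) := by
  rw [← star_eq_adjoint]; exact IsSelfAdjoint.star_mul_self A

lemma absopPow (A : H →L[ℂ] H) {g : ℝ → ℝ} (hg : ContinuousOn g (Set.Ici 0)) :
    (cfc g (absOp A)) ^ 4 = cfc (fun t => g (Real.sqrt t) ^ 4) (adjoint A * A) := by
  have hBsa := adjMulSelfSA A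
  have hgs : Continuous fun t : ℝ => g (Real.sqrt t) :=
    hg.comp_continuous Real.continuous_sqrt fun t => Real.sqrt_nonneg t
  have h1 : cfc g (absOp A) = cfc (fun t => g (Real.sqrt t)) (adjoint A * A) := by
    unfold absOp
    exact (cfc_comp' g Real.sqrt (adjoint A * A)
      (hg.mono (by rintro s ⟨t, ht, rfl⟩; exact Real.sqrt_nonneg t))
      Real.continuous_sqrt.continuousOn hBsa).symm
  rw [h1, ← cfc_pow (fun t => g (Real.sqrt t)) 4 (adjoint A * A) hgs.continuousOn hBsa]

lemma absopSq (A : H →L[ℂ] H) : absOp A ^ 2 = adjoint A * A := by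
  unfold absOp
  rw [← cfc_pow Real.sqrt 2 _ Real.continuous_sqrt.continuousOn (adjMulSelfSA A)]
  calc cfc (fun t => Real.sqrt t ^ 2) (adjoint A * A)
      = cfc (fun t : ℝ => t) (adjoint A * A) := cfc_congr fun t ht =>
        Real.sq_sqrt (spectrum_nonneg_of_nonneg (adjMulSelfNonneg A) ht)
    _ = adjoint A * A := cfc_id' ℝ _ (adjMulSelfSA A)

lemma berBdd {ι : Type*} (k : ι → H) (hk : ∀ l, ‖k l‖ = 1) (T : H →L[ℂ] H) :
    BddAbove (Set.range fun l => ‖⟪T (k l), k l⟫_ℂ‖) := by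
  refine ⟨‖T‖, ?_⟩
  rintro y ⟨l, rfl⟩
  calc ‖⟪T (k l), k l⟫_ℂ‖ ≤ ‖T (k l)‖ * ‖k l‖ := norm_inner_le_norm _ _
    _ ≤ ‖T‖ * ‖k l‖ * ‖k l‖ :=
        mul_le_mul_of_nonneg_right (T.le_opNorm (k l)) (norm_nonneg _)
    _ = ‖T‖ := by rw [hk l]; ring

set_option maxHeartbeats 1000000 in
open Filter in
lemma mainOneSide {Ω : Type*} [Nonempty Ω] (k : Ω → H) (hk : ∀ l, ‖k l‖ = 1)
    (A : H →L[ℂ] H) (g h : ℝ → ℝ)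
    (hg : ContinuousOn g (Set.Ici 0)) (hh : ContinuousOn h (Set.Ici 0))
    (hg0 : ∀ s, 0 ≤ s → 0 ≤ g s) (hh0 : ∀ s, 0 ≤ s → 0 ≤ h s)
    (hgh : ∀ s, 0 ≤ s → g s * h s = s)
    (φ : ℝ → ℝ) (hφc : ContinuousOn φ (Set.Ici 0)) (hφconv : ConvexOn ℝ (Set.Ici 0) φ)
    (hφmono : MonotoneOn φ (Set.Ici 0)) (hφ0 : φ 0 = 0) (hφnn : ∀ s, 0 ≤ s → 0 ≤ φ s)
    (α : ℝ) (hα : α ∈ Set.Icc (0 : ℝ) 1) :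
    φ (berNum k A ^ 2) ≤
      berNum k ((α / 2) • (cfc φ ((cfc g (absOp A)) ^ 4) +
          cfc φ ((cfc h (absOp (adjoint A))) ^ 4)) +
        (1 - α) • cfc φ ((absOp A) ^ 2)) := by
  obtain ⟨hα0, hα1⟩ := hα
  have hgs : Continuous fun t : ℝ => g (Real.sqrt t) :=
    hg.comp_continuous Real.continuous_sqrt fun t => Real.sqrt_nonneg t
  have hhs : Continuous fun t : ℝ => h (Real.sqrt t) :=
    hh.comp_continuous Real.continuous_sqrt fun t => Real.sqrt_nonneg t
  have hB0 := adjMulSelfNonneg A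
  have hBsa := adjMulSelfSA A
  have hC0 : (0 : H →L[ℂ] H) ≤ A * adjoint A := by
    have := adjMulSelfNonneg (adjoint A); rwa [adjoint_adjoint] at this
  have hCsa : IsSelfAdjoint (A * adjoint A) := by
    have := adjMulSelfSA (adjoint A); rwa [adjoint_adjoint] at this
  have hspecB : spectrum ℝ (adjoint A * A) ⊆ Set.Ici 0 :=
    fun t ht => spectrum_nonneg_of_nonneg hB0 ht
  have hspecC : spectrum ℝ (A * adjoint A) ⊆ Set.Ici 0 :=
    fun t ht => spectrum_nonneg_of_nonneg hC0 ht
  -- rewrite the three operators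
  have hPB : (cfc g (absOp A)) ^ 4 = cfc (fun t => g (Real.sqrt t) ^ 4) (adjoint A * A) :=
    absopPow A hg
  have hQC : (cfc h (absOp (adjoint A))) ^ 4
      = cfc (fun t => h (Real.sqrt t) ^ 4) (A * adjoint A) := by
    have := absopPow (adjoint A) hh
    rwa [adjoint_adjoint] at this
  have hB2 : absOp A ^ 2 = adjoint A * A := absopSq A
  rw [hPB, hQC, hB2]
  set PB := cfc (fun t => g (Real.sqrt t) ^ 4) (adjoint A * A) with hPBdef
  set QC := cfc (fun t => h (Real.sqrt t) ^ 4) (A * adjoint A) with hQCdef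
  set T := (α / 2) • (cfc φ PB + cfc φ QC) + (1 - α) • cfc φ (adjoint A * A) with hTdef
  have hPB0 : (0 : H →L[ℂ] H) ≤ PB := cfc_nonneg fun t _ => by positivity
  have hQC0 : (0 : H →L[ℂ] H) ≤ QC := cfc_nonneg fun t _ => by positivity
  -- pointwise estimate
  have hper : ∀ l : Ω, φ (‖⟪A (k l), k l⟫_ℂ‖ ^ 2) ≤ ‖⟪T (k l), k l⟫_ℂ‖ := by
    intro l
    set x := k l with hxdef
    have hx : ‖x‖ = 1 := hk l
    set u2 : ℝ := Complex.re ⟪cfc (fun t => g (Real.sqrt t) ^ 2) (adjoint A * A) x, x⟫_ℂ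
      with hu2
    set v2 : ℝ := Complex.re ⟪cfc (fun t => h (Real.sqrt t) ^ 2) (A * adjoint A) x, x⟫_ℂ
      with hv2
    set u4 : ℝ := Complex.re ⟪PB x, x⟫_ℂ with hu4
    set v4 : ℝ := Complex.re ⟪QC x, x⟫_ℂ with hv4
    set w : ℝ := Complex.re ⟪(adjoint A * A) x, x⟫_ℂ with hw
    have hu2nn : 0 ≤ u2 := ipNonneg' _ (cfc_nonneg fun t _ => by positivity) x
    have hv2nn : 0 ≤ v2 := ipNonneg' _ (cfc_nonneg fun t _ => by positivity) x
    have hu4nn : 0 ≤ u4 := ipNonneg' _ hPB0 x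
    have hv4nn : 0 ≤ v4 := ipNonneg' _ hQC0 x
    have hwnn : 0 ≤ w := ipNonneg' _ hB0 x
    have h1 : ‖⟪A x, x⟫_ℂ‖ ^ 2 ≤ u2 * v2 := myMixed A hg hh hg0 hh0 hgh x hx
    -- Cauchy–Schwarz upgrades
    have h2a : u2 ^ 2 ≤ u4 := by
      have e1 : u2 ≤ ‖cfc (fun t => g (Real.sqrt t) ^ 2) (adjoint A * A) x‖ := by
        calc u2 ≤ ‖⟪cfc (fun t => g (Real.sqrt t) ^ 2) (adjoint A * A) x, x⟫_ℂ‖ :=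
              Complex.re_le_norm _
          _ ≤ ‖cfc (fun t => g (Real.sqrt t) ^ 2) (adjoint A * A) x‖ * ‖x‖ :=
              norm_inner_le_norm _ _
          _ = _ := by rw [hx, mul_one]
      have e2 : ‖cfc (fun t => g (Real.sqrt t) ^ 2) (adjoint A * A) x‖ ^ 2 = u4 := by
        rw [← ipMulSelf' _ (cfc_predicate _ _) x,
          ← cfc_mul (fun t => g (Real.sqrt t) ^ 2) (fun t => g (Real.sqrt t) ^ 2) (adjoint A * A) (hgs.pow 2).continuousOn (hgs.pow 2).continuousOn]
        rw [hu4]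
        have heq : cfc (fun t : ℝ => g (Real.sqrt t) ^ 2 * g (Real.sqrt t) ^ 2)
            (adjoint A * A) = PB := by
          rw [hPBdef]
          exact cfc_congr fun t _ => by ring
        rw [heq]
      calc u2 ^ 2 ≤ ‖cfc (fun t => g (Real.sqrt t) ^ 2) (adjoint A * A) x‖ ^ 2 :=
            pow_le_pow_left₀ hu2nn e1 2
        _ = u4 := e2
    have h2b : v2 ^ 2 ≤ v4 := by
      have e1 : v2 ≤ ‖cfc (fun t => h (Real.sqrt t) ^ 2) (A * adjoint A) x‖ := by
        calc v2 ≤ ‖⟪cfc (fun t => h (Real.sqrt t) ^ 2) (A * adjoint A) x, x⟫_ℂ‖ :=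
              Complex.re_le_norm _
          _ ≤ ‖cfc (fun t => h (Real.sqrt t) ^ 2) (A * adjoint A) x‖ * ‖x‖ :=
              norm_inner_le_norm _ _
          _ = _ := by rw [hx, mul_one]
      have e2 : ‖cfc (fun t => h (Real.sqrt t) ^ 2) (A * adjoint A) x‖ ^ 2 = v4 := by
        rw [← ipMulSelf' _ (cfc_predicate _ _) x,
          ← cfc_mul (fun t => h (Real.sqrt t) ^ 2) (fun t => h (Real.sqrt t) ^ 2) (A * adjoint A) (hhs.pow 2).continuousOn (hhs.pow 2).continuousOn]
        rw [hv4]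
        have heq : cfc (fun t : ℝ => h (Real.sqrt t) ^ 2 * h (Real.sqrt t) ^ 2)
            (A * adjoint A) = QC := by
          rw [hQCdef]
          exact cfc_congr fun t _ => by ring
        rw [heq]
      calc v2 ^ 2 ≤ ‖cfc (fun t => h (Real.sqrt t) ^ 2) (A * adjoint A) x‖ ^ 2 :=
            pow_le_pow_left₀ hv2nn e1 2
        _ = v4 := e2
    have h4 : ‖⟪A x, x⟫_ℂ‖ ^ 2 ≤ w := by
      have e1 : ‖⟪A x, x⟫_ℂ‖ ≤ ‖A x‖ := by
        calc ‖⟪A x, x⟫_ℂ‖ ≤ ‖A x‖ * ‖x‖ := norm_inner_le_norm _ _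
          _ = ‖A x‖ := by rw [hx, mul_one]
      calc ‖⟪A x, x⟫_ℂ‖ ^ 2 ≤ ‖A x‖ ^ 2 := pow_le_pow_left₀ (norm_nonneg _) e1 2
        _ = w := (ipAdjMul' A x).symm
    have ht0nn : (0 : ℝ) ≤ ‖⟪A x, x⟫_ℂ‖ ^ 2 := by positivity
    have h3 : ‖⟪A x, x⟫_ℂ‖ ^ 2 ≤ (u4 + v4) / 2 := by
      have e1 : (‖⟪A x, x⟫_ℂ‖ ^ 2) ^ 2 ≤ u4 * v4 := by
        nlinarith [h1, h2a, h2b, hu2nn, hv2nn, ht0nn, hu4nn, hv4nn]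
      nlinarith [e1, sq_nonneg (u4 - v4), ht0nn, hu4nn, hv4nn]
    have h5 : ‖⟪A x, x⟫_ℂ‖ ^ 2 ≤ α * ((u4 + v4) / 2) + (1 - α) * w := by
      nlinarith [h3, h4]
    have hmem1 : (u4 + v4) / 2 ∈ Set.Ici (0 : ℝ) := by
      simp only [Set.mem_Ici]; linarith
    have hmem2 : w ∈ Set.Ici (0 : ℝ) := hwnn
    have hmemc : α * ((u4 + v4) / 2) + (1 - α) * w ∈ Set.Ici (0 : ℝ) := by
      simp only [Set.mem_Ici]; nlinarith
    have h6 : φ (‖⟪A x, x⟫_ℂ‖ ^ 2) ≤ φ (α * ((u4 + v4) / 2) + (1 - α) * w) :=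
      hφmono ht0nn hmemc h5
    have h7 : φ (α * ((u4 + v4) / 2) + (1 - α) * w)
        ≤ α * φ ((u4 + v4) / 2) + (1 - α) * φ w := by
      have := hφconv.2 hmem1 hmem2 hα0 (by linarith : (0:ℝ) ≤ 1 - α) (by ring)
      simpa [smul_eq_mul] using this
    have h8 : φ ((u4 + v4) / 2) ≤ (φ u4 + φ v4) / 2 := by
      have := hφconv.2 (Set.mem_Ici.mpr hu4nn) (Set.mem_Ici.mpr hv4nn)
        (by norm_num : (0:ℝ) ≤ 1/2) (by norm_num : (0:ℝ) ≤ 1/2) (by norm_num)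
      simp only [smul_eq_mul] at this
      calc φ ((u4 + v4) / 2) = φ (1/2 * u4 + 1/2 * v4) := by ring_nf
        _ ≤ 1/2 * φ u4 + 1/2 * φ v4 := this
        _ = (φ u4 + φ v4) / 2 := by ring
    have h9 : φ u4 ≤ Complex.re ⟪cfc φ PB x, x⟫_ℂ :=
      myJensen PB hPB0 x hx φ hφc hφconv hφnn hφ0
    have h10 : φ v4 ≤ Complex.re ⟪cfc φ QC x, x⟫_ℂ :=
      myJensen QC hQC0 x hx φ hφc hφconv hφnn hφ0
    have h11 : φ w ≤ Complex.re ⟪cfc φ (adjoint A * A) x, x⟫_ℂ :=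
      myJensen _ hB0 x hx φ hφc hφconv hφnn hφ0
    have hTip : Complex.re ⟪T x, x⟫_ℂ
        = (α / 2) * (Complex.re ⟪cfc φ PB x, x⟫_ℂ + Complex.re ⟪cfc φ QC x, x⟫_ℂ)
          + (1 - α) * Complex.re ⟪cfc φ (adjoint A * A) x, x⟫_ℂ := by
      rw [hTdef]
      exact ipCombo' (α / 2) (1 - α) _ _ _ x
    have hend : φ (‖⟪A x, x⟫_ℂ‖ ^ 2) ≤ Complex.re ⟪T x, x⟫_ℂ := by
      rw [hTip]
      have c1 : α * ((φ u4 + φ v4) / 2)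
          ≤ (α / 2) * (Complex.re ⟪cfc φ PB x, x⟫_ℂ + Complex.re ⟪cfc φ QC x, x⟫_ℂ) := by
        have := add_le_add h9 h10
        nlinarith
      have c2 : (1 - α) * φ w
          ≤ (1 - α) * Complex.re ⟪cfc φ (adjoint A * A) x, x⟫_ℂ :=
        mul_le_mul_of_nonneg_left h11 (by linarith)
      have c3 : α * φ ((u4 + v4) / 2) ≤ α * ((φ u4 + φ v4) / 2) :=
        mul_le_mul_of_nonneg_left h8 hα0
      calc φ (‖⟪A x, x⟫_ℂ‖ ^ 2) ≤ α * φ ((u4 + v4) / 2) + (1 - α) * φ w :=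
            h6.trans h7
        _ ≤ _ := by linarith
    calc φ (‖⟪A x, x⟫_ℂ‖ ^ 2) ≤ Complex.re ⟪T x, x⟫_ℂ := hend
      _ ≤ ‖⟪T x, x⟫_ℂ‖ := Complex.re_le_norm _
  -- pass to the supremum
  have hbddT := berBdd k hk T
  have hbddA := berBdd k hk A
  have hCst : ∀ l : Ω, ‖⟪T (k l), k l⟫_ℂ‖ ≤ berNum k T := fun l => le_ciSup hbddT l
  have hper' : ∀ l : Ω, φ (‖⟪A (k l), k l⟫_ℂ‖ ^ 2) ≤ berNum k T :=
    fun l => (hper l).trans (hCst l)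
  set M : ℝ := berNum k A with hM
  have hMnn : 0 ≤ M :=
    le_trans (norm_nonneg _) (le_ciSup hbddA (Classical.arbitrary Ω))
  have hrange : (Set.range fun l : Ω => ‖⟪A (k l), k l⟫_ℂ‖).Nonempty :=
    Set.range_nonempty _
  obtain ⟨y, -, hylim, hymem⟩ := exists_seq_tendsto_sSup hrange hbddA
  have hMs : M = sSup (Set.range fun l : Ω => ‖⟪A (k l), k l⟫_ℂ‖) := rfl
  have htend : Filter.Tendsto (fun n => φ (y n ^ 2)) Filter.atTop (nhds (φ (M ^ 2))) := by
    have hc : ContinuousWithinAt φ (Set.Ici 0) (M ^ 2) := hφc _ (Set.mem_Ici.mpr (by positivity))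
    apply hc.tendsto.comp
    rw [tendsto_nhdsWithin_iff]
    constructor
    · rw [hMs]
      exact (hylim.pow 2)
    · exact Filter.Eventually.of_forall fun n => Set.mem_Ici.mpr (by positivity)
  apply le_of_tendsto htend
  filter_upwards with n
  obtain ⟨l, hl⟩ := hymem n
  rw [← hl]
  exact hper' l

end Main

open Filter in
theorem stmt19 {H : Type*} [NormedAddCommGroup H] [InnerProductSpace ℂ H] [CompleteSpace H]
    {Ω : Type*} [Nonempty Ω] (k : Ω → H) (hk : ∀ l, ‖k l‖ = 1)
    (A : H →L[ℂ] H) (g h : ℝ → ℝ)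
    (hg : ContinuousOn g (Set.Ici 0)) (hh : ContinuousOn h (Set.Ici 0))
    (hg0 : ∀ s, 0 ≤ s → 0 ≤ g s) (hh0 : ∀ s, 0 ≤ s → 0 ≤ h s)
    (hgh : ∀ s, 0 ≤ s → g s * h s = s)
    (φ : ℝ → ℝ) (hφc : ContinuousOn φ (Set.Ici 0)) (hφconv : ConvexOn ℝ (Set.Ici 0) φ)
    (hφmono : MonotoneOn φ (Set.Ici 0)) (hφ0 : φ 0 = 0) (hφnn : ∀ s, 0 ≤ s → 0 ≤ φ s)
    (hφtop : Tendsto φ atTop atTop)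
    (α : ℝ) (hα : α ∈ Set.Icc (0 : ℝ) 1) :
    φ (berNum k A ^ 2) ≤
      berNum k ((α / 2) • (cfc φ ((cfc g (absOp A)) ^ 4) +
          cfc φ ((cfc h (absOp (adjoint A))) ^ 4)) +
        (1 - α) • cfc φ ((absOp A) ^ 2)) ∧
    φ (berNum k A ^ 2) ≤
      berNum k ((α / 2) • (cfc φ ((cfc g (absOp (adjoint A))) ^ 4) +
          cfc φ ((cfc h (absOp A)) ^ 4)) +
        (1 - α) • cfc φ ((absOp (adjoint A)) ^ 2)) := by
  constructor
  · exact mainOneSide k hk A g h hg hh hg0 hh0 hgh φ hφc hφconv hφmono hφ0 hφnn α hα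
  · have h2 := mainOneSide k hk (adjoint A) g h hg hh hg0 hh0 hgh φ hφc hφconv hφmono hφ0
      hφnn α hα
    rw [adjoint_adjoint] at h2
    have hber : berNum k (adjoint A) = berNum k A := by
      unfold berNum
      congr 1
      funext l
      rw [adjoint_inner_left, ← inner_conj_symm, RCLike.norm_conj]
    rwa [hber] at h2
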